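/- arXiv:2103.13831 — 5 statements merged into one kernel-verified Lean document; each statement's English description precedes it below -/
import Mathlib

section
/- Consider the discrete-time linear system x⁺ = A x + B u with A ∈ ℝ^{n×n}, B ∈ ℝ^{n×m}, and a compact convex input set U ⊆ ℝ^m. If X_inv ⊆ ℝ^n is a nonempty compact convex set such that for every x ∈ X_inv there exists u ∈ U with A x + B u ∈ X_inv (i.e., X_inv is a controlled invariant set), then there exists x_s ∈ X_inv and u_s ∈ U such that x_s = A x_s + B u_s (a controlled equilibrium point). -/
/-! Let `K` be the set of all displacements `A x + B u - x` with `x ∈ Xinv`, `u ∈ U`: a compact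
convex set. Any trajectory of the system that stays in `Xinv` has its increments in `K`, so by
convexity its mean displacement `(x N - x 0) / N` lies in `K`. Since `Xinv` is bounded this mean
tends to `0`, and `K` is closed, so `0 ∈ K`: some `(x, u)` is an equilibrium. -/

open Matrix Set Filter Topology

theorem Set.exists_seq_forall_mem_and_rel {α : Type*} {S : Set α} {r : α → α → Prop}
    (hS : S.Nonempty) (h : ∀ x ∈ S, ∃ y ∈ S, r x y) :
    ∃ x : ℕ → α, (∀ k, x k ∈ S) ∧ ∀ k, r (x k) (x (k + 1)) := by
  choose f hfS hfr using h
  obtain ⟨x₀, hx₀⟩ := hS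
  let g : S → S := fun x => ⟨f x x.2, hfS x x.2⟩
  refine ⟨fun k => (g^[k] ⟨x₀, hx₀⟩ : α), fun k => (g^[k] _).2, fun k => ?_⟩
  simp only [Function.iterate_succ_apply']
  exact hfr _ _

theorem Convex.zero_mem_of_isBounded_range_of_forall_sub_mem {E : Type*}
    [NormedAddCommGroup E] [NormedSpace ℝ E] {K : Set E} (hKconv : Convex ℝ K)
    (hKc : IsClosed K) {x : ℕ → E}
    (hx : Bornology.IsBounded (range x)) (hstep : ∀ k, x (k + 1) - x k ∈ K) : (0 : E) ∈ K := by
  have hmean : ∀ N : ℕ, (1 / ((N : ℝ) + 1)) • (x (N + 1) - x 0) ∈ K := by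
    intro N
    rw [← Finset.sum_range_sub, Finset.smul_sum]
    refine hKconv.sum_mem (fun _ _ => by positivity) ?_ (fun k _ => hstep k)
    rw [Finset.sum_const, Finset.card_range, nsmul_eq_mul]
    field_simp
    push_cast
    ring
  obtain ⟨C, hC⟩ := hx.exists_norm_le
  have hbdd : IsBoundedUnder (· ≤ ·) atTop (norm ∘ fun N => x (N + 1) - x 0) :=
    isBoundedUnder_of ⟨C + C, fun N =>
      (norm_sub_le _ _).trans (add_le_add (hC _ ⟨_, rfl⟩) (hC _ ⟨_, rfl⟩))⟩
  have hmean_tendsto :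
      Tendsto (fun N : ℕ => (1 / ((N : ℝ) + 1)) • (x (N + 1) - x 0)) atTop (𝓝 0) :=
    tendsto_one_div_add_atTop_nhds_zero_nat.zero_smul_isBoundedUnder_le hbdd
  exact hKc.mem_of_tendsto hmean_tendsto (Eventually.of_forall hmean)

theorem cis_contains_controlled_equilibrium
    (n m : ℕ) (A : Matrix (Fin n) (Fin n) ℝ) (B : Matrix (Fin n) (Fin m) ℝ)
    (U : Set (Fin m → ℝ)) (hUc : IsCompact U) (hUconv : Convex ℝ U)
    (Xinv : Set (Fin n → ℝ)) (hne : Xinv.Nonempty) (hXc : IsCompact Xinv)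
    (hXconv : Convex ℝ Xinv)
    (hinv : ∀ x ∈ Xinv, ∃ u ∈ U, A.mulVec x + B.mulVec u ∈ Xinv) :
    ∃ xs ∈ Xinv, ∃ us ∈ U, xs = A.mulVec xs + B.mulVec us := by
  let displacement : (Fin n → ℝ) × (Fin m → ℝ) →ₗ[ℝ] Fin n → ℝ :=
    A.mulVecLin ∘ₗ LinearMap.fst ℝ _ _ + B.mulVecLin ∘ₗ LinearMap.snd ℝ _ _ - LinearMap.fst ℝ _ _
  let K := displacement '' (Xinv ×ˢ U)
  have hK : IsCompact K := (hXc.prod hUc).image displacement.continuous_of_finiteDimensional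
  obtain ⟨x, hxX, hstep⟩ :=
    Set.exists_seq_forall_mem_and_rel (r := fun x y => y - x ∈ K) hne fun x hx => by
      obtain ⟨u, hu, hxu⟩ := hinv x hx
      exact ⟨_, hxu, (x, u), ⟨hx, hu⟩, rfl⟩
  have hKconv : Convex ℝ K := (hXconv.prod hUconv).linear_image displacement
  obtain ⟨⟨xs, us⟩, ⟨hxs, hus⟩, h0⟩ :=
    hKconv.zero_mem_of_isBounded_range_of_forall_sub_mem hK.isClosed
      (hXc.isBounded.subset (range_subset_iff.2 hxX)) hstep
  exact ⟨xs, hxs, us, hus, (sub_eq_zero.1 h0).symm⟩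
end

section
/- Consider the impulsive system ẋ = Ax with jumps x(τ_k) = x(τ_k⁻) + B u(τ_{k-1}) at times τ_k = kT, and a convex set Y ⊆ ℝ^n. Suppose Y_inv ⊆ Y is a nonempty compact convex impulsive controlled invariant set: for every x ∈ Y_inv there is u ∈ U (U ⊆ ℝ^m compact convex) with e^{At}x ∈ Y for all t ∈ [0,T] and e^{AT}x + Bu ∈ Y_inv. Then Y_inv contains a point x_s for which there exists u_s ∈ U with e^{AT}x_s + B u_s = x_s and e^{At}x_s ∈ Y for all t ∈ [0,T] (an impulsive controlled equilibrium). -/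
/-!
Along any closed-loop trajectory `x_{k+1} = f x_k + g u_k` inside the compact convex set `K`,
the Cesàro means `(x̄_N, ū_N)` stay in `K × U` by convexity, and by telescoping their
equilibrium defect `f x̄_N + g ū_N - x̄_N` equals `(x_N - x_0) / N`, which tends to `0` since
`K` is bounded. The defect map is continuous, so its image of the compact set `K × U` is closed
and contains `0`: a controlled equilibrium. For the impulsive system this is applied to its
sampled system, with `f = e^{AT}` and `g = B`.
-/

open Set Filter Topology Finset

section CesaroMean

variable {E F : Type*} [AddCommGroup E] [Module ℝ E] [AddCommGroup F] [Module ℝ F]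

noncomputable def cesaroMean (x : ℕ → E) (N : ℕ) : E :=
  (N : ℝ)⁻¹ • ∑ k ∈ range N, x k

theorem Convex.cesaroMean_mem {s : Set E} (hs : Convex ℝ s) {x : ℕ → E} (hx : ∀ k, x k ∈ s)
    {N : ℕ} (hN : 0 < N) : cesaroMean x N ∈ s := by
  rw [cesaroMean, Finset.smul_sum]
  refine hs.sum_mem (fun _ _ => by positivity) ?_ fun k _ => hx k
  simp [hN.ne']

theorem map_cesaroMean {M : Type*} [FunLike M E F] [LinearMapClass M ℝ E F] (f : M)
    (x : ℕ → E) (N : ℕ) :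
    f (cesaroMean x N) = cesaroMean (fun k => f (x k)) N := by
  simp [cesaroMean, map_sum]

theorem cesaroMean_succ_sub (x : ℕ → E) (N : ℕ) :
    cesaroMean (fun k => x (k + 1) - x k) N = (N : ℝ)⁻¹ • (x N - x 0) := by
  rw [cesaroMean, Finset.sum_range_sub]

theorem tendsto_cesaroMean_succ_sub {E : Type*} [NormedAddCommGroup E] [NormedSpace ℝ E]
    {x : ℕ → E} (hx : Bornology.IsBounded (range x)) :
    Tendsto (cesaroMean fun k => x (k + 1) - x k) atTop (𝓝 0) := by
  simp_rw [funext (cesaroMean_succ_sub x)]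
  obtain ⟨C, hC⟩ := hx.exists_norm_le
  refine tendsto_inv_atTop_zero.comp tendsto_natCast_atTop_atTop
    |>.zero_smul_isBoundedUnder_le (isBoundedUnder_of ⟨C + C, fun N => ?_⟩)
  exact (norm_sub_le _ _).trans (add_le_add (hC _ ⟨N, rfl⟩) (hC _ ⟨0, rfl⟩))

end CesaroMean

section ControlledInvariant

variable {E F : Type*} [NormedAddCommGroup E] [NormedSpace ℝ E]
  [NormedAddCommGroup F] [NormedSpace ℝ F]

def IsControlledInvariant (f : E →L[ℝ] E) (g : F →L[ℝ] E) (U : Set F) (K : Set E) : Prop :=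
  ∀ x ∈ K, ∃ u ∈ U, f x + g u ∈ K

theorem IsControlledInvariant.exists_equilibrium {f : E →L[ℝ] E} {g : F →L[ℝ] E}
    {U : Set F} {K : Set E} (hK : IsControlledInvariant f g U K)
    (hKc : IsCompact K) (hKconv : Convex ℝ K) (hKne : K.Nonempty)
    (hUc : IsCompact U) (hUconv : Convex ℝ U) :
    ∃ x ∈ K, ∃ u ∈ U, f x + g u = x := by
  choose! u hu hstep using hK
  obtain ⟨x₀, hx₀⟩ := hKne
  set x : ℕ → E := fun k => (fun y => f y + g (u y))^[k] x₀
  have hx : ∀ k, x k ∈ K := fun k => (MapsTo.iterate (fun y hy => hstep y hy) k) hx₀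
  have hxsucc : ∀ k, x (k + 1) = f (x k) + g (u (x k)) := fun k =>
    Function.iterate_succ_apply' _ k x₀
  have hxu : ∀ k, (x k, u (x k)) ∈ K ×ˢ U := fun k => ⟨hx k, hu _ (hx k)⟩
  let D : E × F →L[ℝ] E :=
    f.comp (.fst ℝ E F) + g.comp (.snd ℝ E F) - .fst ℝ E F
  have hDx : ∀ k, D (x k, u (x k)) = x (k + 1) - x k := fun k => by
    rw [hxsucc]
    rfl
  have hlim : Tendsto (fun N => D (cesaroMean (fun k => (x k, u (x k))) N)) atTop (𝓝 0) := by
    simp_rw [map_cesaroMean D, hDx]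
    exact tendsto_cesaroMean_succ_sub (hKc.isBounded.subset (range_subset_iff.2 hx))
  obtain ⟨⟨xs, us⟩, ⟨hxs, hus⟩, hD⟩ : (0 : E) ∈ D '' (K ×ˢ U) :=
    ((hKc.prod hUc).image D.continuous).isClosed.mem_of_tendsto hlim <|
      (eventually_gt_atTop 0).mono fun N hN =>
        mem_image_of_mem D ((hKconv.prod hUconv).cesaroMean_mem hxu hN)
  exact ⟨xs, hxs, us, hus, by simpa [D, sub_eq_zero] using hD⟩

end ControlledInvariant

theorem icis_contains_impulsive_equilibrium_general
    (n m : ℕ) (A : Matrix (Fin n) (Fin n) ℝ) (B : Matrix (Fin n) (Fin m) ℝ)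
    (T : ℝ)
    (U : Set (Fin m → ℝ)) (hUc : IsCompact U) (hUconv : Convex ℝ U)
    (Y : Set (Fin n → ℝ))
    (Yinv : Set (Fin n → ℝ)) (hne : Yinv.Nonempty)
    (hYc : IsCompact Yinv) (hYinvconv : Convex ℝ Yinv)
    (hinv : ∀ x ∈ Yinv, ∃ u ∈ U,
      (∀ t ∈ Set.Icc (0 : ℝ) T, (NormedSpace.exp (t • A)).mulVec x ∈ Y) ∧
      (NormedSpace.exp (T • A)).mulVec x + B.mulVec u ∈ Yinv) :
    ∃ xs ∈ Yinv, ∃ us ∈ U,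
      (NormedSpace.exp (T • A)).mulVec xs + B.mulVec us = xs ∧
      (∀ t ∈ Set.Icc (0 : ℝ) T, (NormedSpace.exp (t • A)).mulVec xs ∈ Y) := by
  have hsampled : IsControlledInvariant (NormedSpace.exp (T • A)).mulVecLin.toContinuousLinearMap
      B.mulVecLin.toContinuousLinearMap U Yinv := fun x hx =>
    let ⟨u, hu, _, hjump⟩ := hinv x hx
    ⟨u, hu, hjump⟩
  obtain ⟨xs, hxs, us, hus, hfix⟩ := hsampled.exists_equilibrium hYc hYinvconv hne hUc hUconv
  exact ⟨xs, hxs, us, hus, hfix, (hinv xs hxs).choose_spec.2.1⟩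

theorem icis_contains_impulsive_equilibrium
    (n m : ℕ) (A : Matrix (Fin n) (Fin n) ℝ) (B : Matrix (Fin n) (Fin m) ℝ)
    (T : ℝ) (hT : 0 < T)
    (U : Set (Fin m → ℝ)) (hUc : IsCompact U) (hUconv : Convex ℝ U)
    (Y : Set (Fin n → ℝ)) (hYconv : Convex ℝ Y)
    (Yinv : Set (Fin n → ℝ)) (hsub : Yinv ⊆ Y) (hne : Yinv.Nonempty)
    (hYc : IsCompact Yinv) (hYinvconv : Convex ℝ Yinv)
    (hinv : ∀ x ∈ Yinv, ∃ u ∈ U,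
      (∀ t ∈ Set.Icc (0 : ℝ) T, (NormedSpace.exp (t • A)).mulVec x ∈ Y) ∧
      (NormedSpace.exp (T • A)).mulVec x + B.mulVec u ∈ Yinv) :
    ∃ xs ∈ Yinv, ∃ us ∈ U,
      (NormedSpace.exp (T • A)).mulVec xs + B.mulVec us = xs ∧
      (∀ t ∈ Set.Icc (0 : ℝ) T, (NormedSpace.exp (t • A)).mulVec xs ∈ Y) :=
  icis_contains_impulsive_equilibrium_general n m A B T U hUc hUconv Y Yinv hne hYc hYinvconv hinv
end

section
/- Let A ∈ ℝ^{n×n}, B ∈ ℝ^{n×m}, U ⊆ ℝ^m a compact convex polytope, and X_inv ⊆ ℝ^n a compact convex polytope that is a controlled invariant set for x⁺ = Ax + Bu (i.e., 𝒰(x) := {u ∈ U : Ax + Bu ∈ X_inv} is nonempty for all x ∈ X_inv). Then the correspondence x ↦ 𝒰(x) is lower hemicontinuous on X_inv: for every x ∈ X_inv, every sequence x_k ∈ X_inv with x_k → x, and every u ∈ 𝒰(x), there exist u_k ∈ 𝒰(x_k) with u_k → u. -/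
/-!
Every point `y` of a polytope `conv F` can be written as `(1 - τ) x + τ z` with `z` in the polytope
and `τ ≤ C ‖y - x‖`: write `y - x` as a nonnegative combination of the vectors `v - x`
(`v ∈ F`), reduce it by conic Carathéodory to a linearly independent subfamily, on which the
total weight `τ` is bounded by `C ‖y - x‖`. Given `xₖ = (1 - τₖ) x + τₖ zₖ` and an admissible
input `wₖ` at `zₖ`, the input `uₖ = (1 - τₖ) u + τₖ wₖ` is admissible at `xₖ` because the graph
of the correspondence is convex, and `‖uₖ - u‖ ≤ τₖ diam U → 0`.
-/

open Matrix Set Filter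

section Polytope

open Finset

theorem exists_linearIndepOn_subset_sum_smul_eq {𝕜 ι M : Type*} [Field 𝕜] [LinearOrder 𝕜]
    [IsStrictOrderedRing 𝕜] [AddCommGroup M] [Module 𝕜 M] (f : ι → M) (s : Finset ι) (c : ι → 𝕜)
    (hc : ∀ i ∈ s, 0 ≤ c i) :
    ∃ t ⊆ s, LinearIndepOn 𝕜 f (t : Set ι) ∧
      ∃ d : ι → 𝕜, (∀ i ∈ t, 0 ≤ d i) ∧ ∑ i ∈ t, d i • f i = ∑ i ∈ s, c i • f i := by
  classical
  induction s using Finset.strongInduction generalizing c with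
  | H s ih =>
    by_cases hli : LinearIndepOn 𝕜 f (s : Set ι)
    · exact ⟨s, subset_rfl, hli, c, hc, rfl⟩
    obtain ⟨e, he, i₀, hi₀, he₀⟩ :
        ∃ e : ι → 𝕜, ∑ i ∈ s, e i • f i = 0 ∧ ∃ i ∈ s, 0 < e i := by
      obtain ⟨g, hg, j, hj, hgj⟩ := not_linearIndepOn_finset_iff.mp hli
      rcases hgj.lt_or_gt with h | h
      · exact ⟨-g, by simp [hg], j, hj, by simpa using h⟩
      · exact ⟨g, hg, j, hj, h⟩
    -- `r • e` is the largest multiple of the relation `e` that keeps `c - r • e` nonnegative;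
    -- it vanishes at `k`, so `k` can be dropped.
    obtain ⟨k, hk, hmin⟩ := ({i ∈ s | 0 < e i}).exists_min_image (fun i => c i / e i)
      ⟨i₀, mem_filter.2 ⟨hi₀, he₀⟩⟩
    rw [mem_filter] at hk
    set r := c k / e k
    have hc' : ∀ i ∈ s, 0 ≤ c i - r * e i := by
      intro i hi
      rcases lt_or_ge 0 (e i) with hei | hei
      · have := hmin i (mem_filter.2 ⟨hi, hei⟩)
        rw [le_div_iff₀ hei] at this
        linarith
      · nlinarith [hc i hi, div_nonneg (hc k hk.1) hk.2.le]
    obtain ⟨t, hts, hti, d, hd, hsum⟩ := ih (s.erase k) (erase_ssubset hk.1) _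
      fun i hi => hc' i (mem_of_mem_erase hi)
    refine ⟨t, hts.trans (erase_subset _ _), hti, d, hd, ?_⟩
    rw [hsum, sum_erase _ (by simp [r, div_mul_cancel₀ _ hk.2.ne'])]
    simp only [sub_smul, mul_smul, sum_sub_distrib, ← smul_sum, he, smul_zero, sub_zero]

variable {ι E : Type*} [NormedAddCommGroup E] [NormedSpace ℝ E]

theorem LinearIndepOn.exists_sum_abs_le_mul_norm {f : ι → E} {t : Finset ι}
    (hf : LinearIndepOn ℝ f (t : Set ι)) :
    ∃ K, ∀ d : ι → ℝ, ∑ i ∈ t, |d i| ≤ K * ‖∑ i ∈ t, d i • f i‖ := by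
  obtain ⟨K, -, hK⟩ := (Fintype.linearCombination ℝ fun i : t => f i).injective_iff_antilipschitz.mp
    hf.fintypeLinearCombination_injective
  refine ⟨#t * K, fun d => ?_⟩
  let d' : t → ℝ := fun i => d i
  have hd' : ‖d'‖ ≤ K * ‖∑ i ∈ t, d i • f i‖ := by
    have := hK.le_mul_norm (map_zero _) d'
    rwa [Fintype.linearCombination_apply, sum_coe_sort t fun i => d i • f i] at this
  calc ∑ i ∈ t, |d i| = ∑ i : t, ‖d' i‖ := (sum_coe_sort t _).symm
    _ ≤ ∑ _i : t, ‖d'‖ := sum_le_sum fun i _ => norm_le_pi_norm d' i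
    _ = #t * ‖d'‖ := by simp
    _ ≤ #t * (K * ‖∑ i ∈ t, d i • f i‖) := by gcongr
    _ = #t * K * ‖∑ i ∈ t, d i • f i‖ := by ring

theorem exists_nonneg_sum_smul_eq_sum_le_mul_norm (f : ι → E) (s : Finset ι) :
    ∃ K, ∀ c : ι → ℝ, (∀ i ∈ s, 0 ≤ c i) →
      ∃ t ⊆ s, ∃ d : ι → ℝ, (∀ i ∈ t, 0 ≤ d i) ∧ ∑ i ∈ t, d i • f i = ∑ i ∈ s, c i • f i ∧
        ∑ i ∈ t, d i ≤ K * ‖∑ i ∈ s, c i • f i‖ := by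
  have hK : ∀ t ∈ s.powerset, ∀ᶠ K in atTop, LinearIndepOn ℝ f (t : Set ι) →
      ∀ d : ι → ℝ, ∑ i ∈ t, |d i| ≤ K * ‖∑ i ∈ t, d i • f i‖ := by
    intro t _
    by_cases ht : LinearIndepOn ℝ f (t : Set ι)
    · obtain ⟨K₀, hK₀⟩ := ht.exists_sum_abs_le_mul_norm
      filter_upwards [eventually_ge_atTop K₀] with K hK _ d
      exact (hK₀ d).trans (by gcongr)
    · exact Eventually.of_forall fun _ h => absurd h ht
  obtain ⟨K, hK⟩ := ((eventually_all_finset _).2 hK).exists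
  refine ⟨K, fun c hc => ?_⟩
  obtain ⟨t, hts, hti, d, hd, hsum⟩ := exists_linearIndepOn_subset_sum_smul_eq f s c hc
  refine ⟨t, hts, d, hd, hsum, ?_⟩
  calc ∑ i ∈ t, d i = ∑ i ∈ t, |d i| := sum_congr rfl fun i hi => (abs_of_nonneg (hd i hi)).symm
    _ ≤ K * ‖∑ i ∈ t, d i • f i‖ := hK t (mem_powerset.2 hts) hti d
    _ = K * ‖∑ i ∈ s, c i • f i‖ := by rw [hsum]

/-- Radial convexity of `X` at `x` in quantitative form; for convex `X` it is equivalent to the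
existence of `ε > 0` with `x + (ε / ‖y - x‖) • (y - x) ∈ X` for all `y ∈ X` with `‖y - x‖ ≤ ε`. -/
def IsRadialAt (X : Set E) (x : E) : Prop :=
  ∃ C, ∀ y ∈ X, ∃ τ ∈ Icc (0 : ℝ) 1, τ ≤ C * ‖y - x‖ ∧ ∃ z ∈ X, y = (1 - τ) • x + τ • z

theorem isRadialAt_convexHull_finset (F : Finset E) (x : E) :
    IsRadialAt (convexHull ℝ (F : Set E)) x := by
  obtain ⟨K, hK⟩ := exists_nonneg_sum_smul_eq_sum_le_mul_norm (fun v => v - x) F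
  refine ⟨K, fun y hy => ?_⟩
  obtain ⟨w, hw₀, hw₁, hwy⟩ := Finset.mem_convexHull'.1 hy
  have hw_sub : ∑ v ∈ F, w v • (v - x) = y - x := by
    simp only [smul_sub, sum_sub_distrib, ← sum_smul, hw₁, hwy, one_smul]
  obtain ⟨t, htF, d, hd, hdsum, hdle⟩ := hK w hw₀
  rw [hw_sub] at hdsum hdle
  have hy_eq : y = (1 - ∑ i ∈ t, d i) • x + ∑ i ∈ t, d i • i := by
    simp only [smul_sub, sum_sub_distrib, ← sum_smul] at hdsum
    linear_combination (norm := module) -hdsum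
  rcases (sum_nonneg hd).eq_or_lt with hσ | hσ
  · have hd₀ : ∀ i ∈ t, d i = 0 := (sum_eq_zero_iff_of_nonneg hd).1 hσ.symm
    have hyx : y = x := by
      rwa [← hσ, sum_eq_zero fun i hi => by rw [hd₀ i hi, zero_smul], sub_zero, one_smul,
        add_zero] at hy_eq
    exact ⟨0, ⟨le_rfl, zero_le_one⟩, by simp [hyx], x, hyx ▸ hy, by simp [hyx]⟩
  rcases le_or_gt (∑ i ∈ t, d i) 1 with hσ₁ | hσ₁
  · refine ⟨∑ i ∈ t, d i, ⟨hσ.le, hσ₁⟩, hdle, t.centerMass d id,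
      t.centerMass_mem_convexHull hd hσ fun i hi => htF hi, ?_⟩
    rwa [centerMass, smul_inv_smul₀ hσ.ne']
  · exact ⟨1, ⟨zero_le_one, le_rfl⟩, hσ₁.le.trans hdle, y, hy, by simp⟩

end Polytope

section Correspondence

variable {E F : Type*} [NormedAddCommGroup E] [NormedSpace ℝ E] [NormedAddCommGroup F]
  [NormedSpace ℝ F] {X : Set E} {x : E} {Γ : Set (E × F)} {u : F}

theorem IsRadialAt.exists_mem_norm_sub_le (hX : IsRadialAt X x) (hΓ : Convex ℝ Γ)
    (hb : Bornology.IsBounded (Prod.snd '' Γ)) (hdom : ∀ y ∈ X, ∃ v, (y, v) ∈ Γ)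
    (hu : (x, u) ∈ Γ) : ∃ C, ∀ y ∈ X, ∃ v, (y, v) ∈ Γ ∧ ‖v - u‖ ≤ C * ‖y - x‖ := by
  obtain ⟨C, hC⟩ := hX
  obtain ⟨M, hM⟩ := isBounded_iff_forall_norm_le.1 hb
  refine ⟨C * (M + M), fun y hy => ?_⟩
  obtain ⟨τ, ⟨hτ₀, hτ₁⟩, hτC, z, hz, rfl⟩ := hC y hy
  obtain ⟨w, hw⟩ := hdom z hz
  refine ⟨(1 - τ) • u + τ • w, by simpa using hΓ hu hw (sub_nonneg.2 hτ₁) hτ₀ (by ring), ?_⟩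
  calc ‖(1 - τ) • u + τ • w - u‖ = τ * ‖w - u‖ := by
        rw [show (1 - τ) • u + τ • w - u = τ • (w - u) by module, norm_smul,
          Real.norm_of_nonneg hτ₀]
    _ ≤ C * ‖(1 - τ) • x + τ • z - x‖ * (M + M) :=
        mul_le_mul hτC (norm_sub_le_of_le (hM w ⟨_, hw, rfl⟩) (hM u ⟨_, hu, rfl⟩))
          (norm_nonneg _) (hτ₀.trans hτC)
    _ = C * (M + M) * ‖(1 - τ) • x + τ • z - x‖ := by ring

theorem IsRadialAt.exists_tendsto {α : Type*} {l : Filter α} (hX : IsRadialAt X x)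
    (hΓ : Convex ℝ Γ) (hb : Bornology.IsBounded (Prod.snd '' Γ))
    (hdom : ∀ y ∈ X, ∃ v, (y, v) ∈ Γ) (hu : (x, u) ∈ Γ) {xs : α → E} (hxs : ∀ a, xs a ∈ X)
    (hlim : Tendsto xs l (nhds x)) :
    ∃ us : α → F, (∀ a, (xs a, us a) ∈ Γ) ∧ Tendsto us l (nhds u) := by
  obtain ⟨C, hC⟩ := hX.exists_mem_norm_sub_le hΓ hb hdom hu
  choose us hus hbound using fun a => hC (xs a) (hxs a)
  refine ⟨us, hus, tendsto_iff_norm_sub_tendsto_zero.2 <|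
    squeeze_zero (fun a => norm_nonneg _) hbound ?_⟩
  simpa using (tendsto_iff_norm_sub_tendsto_zero.1 hlim).const_mul C

end Correspondence

theorem correspondence_lower_hemicontinuous
    (n m : ℕ) (A : Matrix (Fin n) (Fin n) ℝ) (B : Matrix (Fin n) (Fin m) ℝ)
    (U : Set (Fin m → ℝ)) (FU : Finset (Fin m → ℝ)) (hU : U = convexHull ℝ (FU : Set (Fin m → ℝ)))
    (Xinv : Set (Fin n → ℝ)) (FX : Finset (Fin n → ℝ))
    (hX : Xinv = convexHull ℝ (FX : Set (Fin n → ℝ)))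
    (hcis : ∀ x ∈ Xinv, ∃ u ∈ U, A.mulVec x + B.mulVec u ∈ Xinv) :
    ∀ x ∈ Xinv, ∀ xk : ℕ → (Fin n → ℝ), (∀ k, xk k ∈ Xinv) →
      Filter.Tendsto xk Filter.atTop (nhds x) →
      ∀ u ∈ U, A.mulVec x + B.mulVec u ∈ Xinv →
        ∃ uk : ℕ → (Fin m → ℝ),
          (∀ k, uk k ∈ U ∧ A.mulVec (xk k) + B.mulVec (uk k) ∈ Xinv) ∧
          Filter.Tendsto uk Filter.atTop (nhds u) := by
  intro x _ xk hxk hlim u hu hxu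
  set Γ : Set ((Fin n → ℝ) × (Fin m → ℝ)) := {p | p.2 ∈ U ∧ A *ᵥ p.1 + B *ᵥ p.2 ∈ Xinv}
  have hΓ : Convex ℝ Γ := by
    have hUc : Convex ℝ U := hU ▸ convex_convexHull ℝ _
    have hXc : Convex ℝ Xinv := hX ▸ convex_convexHull ℝ _
    convert (convex_univ.prod hUc).inter (hXc.linear_preimage (A.mulVecLin.coprod B.mulVecLin))
      using 1
    ext; simp [Γ]
  have hb : Bornology.IsBounded (Prod.snd '' Γ) :=
    (hU ▸ isBounded_convexHull.2 FU.finite_toSet.isBounded).subset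
      (image_subset_iff.2 fun _ hp => hp.1)
  have hrad : IsRadialAt Xinv x := hX ▸ isRadialAt_convexHull_finset FX x
  exact hrad.exists_tendsto hΓ hb hcis ⟨hu, hxu⟩ hxk hlim
end

section
/- Let a < b be reals, n = 2m, and let p be a univariate real polynomial of degree at most n. Then p(w) ≥ 0 for all w ∈ [a,b] if and only if there exist polynomials q₁ of degree ≤ m and q₂ of degree ≤ m−1 such that p(w) = q₁(w)² + (w−a)(b−w) q₂(w)² for all w. -/
/-!
Write `g = (X - a)(b - X)`. Polynomials of the form `x² + g y²` (even degree) and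
`(X - a) x² + (b - X) y²` (odd degree) are closed under multiplication by Brahmagupta-type
identities, with the degree bounds adding up. A polynomial that is nonnegative on `[a, b]` has a
factor of one of these forms: a linear factor `X - r` with `r ≤ a` or `r - X` with `r ≥ b`, a
square `(X - r)²` at an interior root (which is a local minimum, hence a double root), or a
quadratic without real roots. The cofactor is again nonnegative on `[a, b]`, and induction on the
degree finishes. A monic quadratic `f` with nonpositive discriminant is `x² + g y²` because
`f - t g` becomes a perfect square for a suitable `t ≥ 0`.
-/

open Polynomial Set

namespace MarkovLukacs

def LukacsEven (a b : ℝ) (k : ℕ) (p : ℝ[X]) : Prop :=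
  ∃ x y : ℝ[X], x.degree ≤ k ∧ y.degree < k ∧ p = x ^ 2 + (X - C a) * (C b - X) * y ^ 2

def LukacsOdd (a b : ℝ) (k : ℕ) (p : ℝ[X]) : Prop :=
  ∃ x y : ℝ[X], x.degree ≤ k ∧ y.degree ≤ k ∧ p = (X - C a) * x ^ 2 + (C b - X) * y ^ 2

/-- The representation matching the parity of `n`; all its terms have degree at most `n`. -/
def LukacsRep (a b : ℝ) (n : ℕ) (p : ℝ[X]) : Prop :=
  if Even n then LukacsEven a b (n / 2) p else LukacsOdd a b (n / 2) p

variable {a b : ℝ} {k l : ℕ} {f p q : ℝ[X]}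

lemma degree_mul_le_add (hp : p.degree ≤ k) (hq : q.degree ≤ l) :
    (p * q).degree ≤ (k + l : ℕ) := by
  rw [Nat.cast_add]
  exact degree_mul_le_of_le hp hq

lemma degree_mul_lt_add (hp : p.degree ≤ k) (hq : q.degree < l) :
    (p * q).degree < (k + l : ℕ) := by
  rcases eq_or_ne p 0 with rfl | hp0
  · simp
  rw [degree_mul, Nat.cast_add]
  exact WithBot.add_lt_add_of_le_of_lt (degree_ne_bot.2 hp0) hp hq

lemma degree_mul_le_of_degree_le_one (hf : f.degree ≤ 1) (hp : p.degree < k) :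
    (f * p).degree ≤ k :=
  calc (f * p).degree ≤ f.degree + p.degree := degree_mul_le _ _
    _ ≤ 1 + p.degree := by gcongr
    _ = p.degree + 1 := add_comm _ _
    _ ≤ k := Nat.WithBot.add_one_le_of_lt hp

lemma degree_C_sub_X_le (b : ℝ) : (C b - X).degree ≤ 1 := by
  compute_degree!

lemma LukacsEven.mul (hp : LukacsEven a b k p) (hq : LukacsEven a b l q) :
    LukacsEven a b (k + l) (p * q) := by
  obtain ⟨x, y, hx, hy, rfl⟩ := hp
  obtain ⟨u, v, hu, hv, rfl⟩ := hq
  refine ⟨x * u - (X - C a) * y * ((C b - X) * v), x * v + u * y, ?_, ?_, by ring⟩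
  · exact (degree_sub_le _ _).trans <| max_le (degree_mul_le_add hx hu) <|
      degree_mul_le_add (degree_mul_le_of_degree_le_one (degree_X_sub_C_le a) hy)
        (degree_mul_le_of_degree_le_one (degree_C_sub_X_le b) hv)
  · exact (degree_add_le _ _).trans_lt <|
      max_lt (degree_mul_lt_add hx hv) (add_comm l k ▸ degree_mul_lt_add hu hy)

lemma LukacsEven.mul_lukacsOdd (hp : LukacsEven a b k p) (hq : LukacsOdd a b l q) :
    LukacsOdd a b (k + l) (p * q) := by
  obtain ⟨x, y, hx, hy, rfl⟩ := hp
  obtain ⟨u, v, hu, hv, rfl⟩ := hq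
  refine ⟨x * u + (C b - X) * y * v, x * v - (X - C a) * y * u, ?_, ?_, by ring⟩
  · exact (degree_add_le _ _).trans <| max_le (degree_mul_le_add hx hu) <|
      degree_mul_le_add (degree_mul_le_of_degree_le_one (degree_C_sub_X_le b) hy) hv
  · exact (degree_sub_le _ _).trans <| max_le (degree_mul_le_add hx hv) <|
      degree_mul_le_add (degree_mul_le_of_degree_le_one (degree_X_sub_C_le a) hy) hu

lemma LukacsOdd.mul (hp : LukacsOdd a b k p) (hq : LukacsOdd a b l q) :
    LukacsEven a b (k + l + 1) (p * q) := by
  obtain ⟨x, y, hx, hy, rfl⟩ := hp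
  obtain ⟨u, v, hu, hv, rfl⟩ := hq
  refine ⟨x * u * (X - C a) - y * v * (C b - X), x * v + y * u, ?_, ?_, by ring⟩
  · exact (degree_sub_le _ _).trans <| max_le
      (degree_mul_le_add (degree_mul_le_add hx hu) (degree_X_sub_C_le a))
      (degree_mul_le_add (degree_mul_le_add hy hv) (degree_C_sub_X_le b))
  · have hkl : ((k + l : ℕ) : WithBot ℕ) < (k + l + 1 : ℕ) := by
      exact_mod_cast (k + l).lt_succ_self
    exact (degree_add_le _ _).trans_lt <|
      max_lt ((degree_mul_le_add hx hv).trans_lt hkl) ((degree_mul_le_add hy hu).trans_lt hkl)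

lemma lukacsRep_two_mul : LukacsRep a b (2 * k) p ↔ LukacsEven a b k p := by
  simp [LukacsRep]

lemma lukacsRep_two_mul_add_one : LukacsRep a b (2 * k + 1) p ↔ LukacsOdd a b k p := by
  simp [LukacsRep, Nat.add_div_of_dvd_right]

lemma LukacsRep.mul {n m : ℕ} (hp : LukacsRep a b n p) (hq : LukacsRep a b m q) :
    LukacsRep a b (n + m) (p * q) := by
  obtain ⟨k, rfl | rfl⟩ := n.even_or_odd' <;> obtain ⟨l, rfl | rfl⟩ := m.even_or_odd'
  · rw [show 2 * k + 2 * l = 2 * (k + l) by ring, lukacsRep_two_mul]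
    exact (lukacsRep_two_mul.1 hp).mul (lukacsRep_two_mul.1 hq)
  · rw [show 2 * k + (2 * l + 1) = 2 * (k + l) + 1 by ring, lukacsRep_two_mul_add_one]
    exact (lukacsRep_two_mul.1 hp).mul_lukacsOdd (lukacsRep_two_mul_add_one.1 hq)
  · rw [show 2 * k + 1 + 2 * l = 2 * (l + k) + 1 by ring, lukacsRep_two_mul_add_one, mul_comm]
    exact (lukacsRep_two_mul.1 hq).mul_lukacsOdd (lukacsRep_two_mul_add_one.1 hp)
  · rw [show 2 * k + 1 + (2 * l + 1) = 2 * (k + l + 1) by ring, lukacsRep_two_mul]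
    exact (lukacsRep_two_mul_add_one.1 hp).mul (lukacsRep_two_mul_add_one.1 hq)

lemma LukacsRep.eval_nonneg {n : ℕ} (hp : LukacsRep a b n p) {w : ℝ} (hw : w ∈ Icc a b) :
    0 ≤ p.eval w := by
  have ha : 0 ≤ w - a := sub_nonneg.2 hw.1
  have hb : 0 ≤ b - w := sub_nonneg.2 hw.2
  unfold LukacsRep at hp
  split_ifs at hp <;> obtain ⟨x, y, -, -, rfl⟩ := hp <;>
    simp only [eval_add, eval_mul, eval_pow, eval_sub, eval_X, eval_C] <;> positivity

lemma lukacsRep_zero_C {c : ℝ} (hc : 0 ≤ c) : LukacsRep a b 0 (C c) := by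
  refine lukacsRep_two_mul.2 ⟨C √c, 0, degree_C_le, by simp, ?_⟩
  rw [← C_pow, Real.sq_sqrt hc]
  ring

lemma lukacsRep_one_of_degree_le_one (hab : a < b) (hp : p.degree ≤ 1) (ha : 0 ≤ p.eval a)
    (hb : 0 ≤ p.eval b) : LukacsRep a b 1 p := by
  have hba : 0 < b - a := sub_pos.2 hab
  refine lukacsRep_two_mul_add_one.2
    ⟨C √(p.eval b / (b - a)), C √(p.eval a / (b - a)), degree_C_le, degree_C_le, ?_⟩
  rw [← C_pow, ← C_pow, Real.sq_sqrt (by positivity), Real.sq_sqrt (by positivity)]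
  rw [eq_X_add_C_of_degree_le_one hp] at ha hb ⊢
  refine Polynomial.funext fun w => ?_
  simp only [eval_add, eval_mul, eval_sub, eval_X, eval_C] at ha hb ⊢
  field_simp
  ring

lemma LukacsRep.mono (hab : a < b) {n m : ℕ} (hp : LukacsRep a b n p) (hnm : n ≤ m) :
    LukacsRep a b m p := by
  induction m, hnm using Nat.le_induction with
  | base => exact hp
  | succ m _ ih =>
    simpa using ih.mul (lukacsRep_one_of_degree_le_one (p := 1) hab (by simp) (by simp) (by simp))

lemma exists_nonneg_quadratic_eq_zero {α β γ : ℝ} (hα : 0 < α) (hγ : γ ≤ 0) :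
    ∃ t, 0 ≤ t ∧ α * (t * t) + β * t + γ = 0 := by
  have hdisc : β ^ 2 ≤ discrim α β γ := by
    rw [discrim]
    nlinarith
  have hs : discrim α β γ = √(discrim α β γ) * √(discrim α β γ) :=
    (Real.mul_self_sqrt ((sq_nonneg β).trans hdisc)).symm
  refine ⟨(-β + √(discrim α β γ)) / (2 * α), div_nonneg ?_ (by positivity),
    (quadratic_eq_zero_iff hα.ne' hs _).2 (Or.inl rfl)⟩
  linarith [le_abs_self β, Real.abs_le_sqrt hdisc]

lemma exists_sq_eq_of_discrim_eq_zero {α β γ : ℝ} (hα : 0 < α) (h : discrim α β γ = 0) :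
    ∃ μ ν : ℝ, C α * X ^ 2 + C β * X + C γ = (C μ * X + C ν) ^ 2 := by
  refine ⟨√α, β / (2 * √α), Polynomial.funext fun w => ?_⟩
  have hsq : √α ^ 2 = α := Real.sq_sqrt hα.le
  rw [discrim] at h
  simp only [eval_add, eval_mul, eval_pow, eval_X, eval_C]
  field_simp
  rw [hsq]
  linear_combination -h

lemma lukacsRep_two_of_discrim_nonpos (hab : a < b) {c d : ℝ} (hcd : discrim 1 c d ≤ 0) :
    LukacsRep a b 2 (X ^ 2 + C c * X + C d) := by
  -- The discriminant of `(1 + t) X² + (c - t (a + b)) X + (d + t a b) = f - t g` is a quadratic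
  -- in `t` with leading coefficient `(a - b)²` and constant term `discrim 1 c d ≤ 0`.
  obtain ⟨t, ht, hroot⟩ := exists_nonneg_quadratic_eq_zero
    (β := -(2 * c * (a + b) + 4 * a * b + 4 * d)) (by nlinarith : 0 < (a - b) ^ 2) hcd
  obtain ⟨μ, ν, hsq⟩ := exists_sq_eq_of_discrim_eq_zero (by linarith : 0 < 1 + t)
    (show discrim (1 + t) (c - t * (a + b)) (d + t * a * b) = 0 by
      unfold discrim at hroot ⊢
      linear_combination hroot)
  refine lukacsRep_two_mul.2 ⟨C μ * X + C ν, C √t, degree_linear_le, ?_, ?_⟩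
  · exact degree_C_le.trans_lt (by norm_num)
  · rw [← hsq, ← C_pow, Real.sq_sqrt ht]
    simp only [map_add, map_mul, map_sub, map_one]
    ring

lemma X_sub_C_sq_dvd_of_eventually_nonneg {r : ℝ} (hr : p.IsRoot r)
    (hp : ∀ᶠ w in nhds r, 0 ≤ p.eval w) : (X - C r) ^ 2 ∣ p := by
  rcases eq_or_ne p 0 with rfl | hp0
  · exact dvd_zero _
  have hmin : IsLocalMin (fun w => p.eval w) r := by
    simpa [IsLocalMin, IsMinFilter, hr.eq_zero] using hp
  have hcrit : p.derivative.IsRoot r := by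
    simpa [Polynomial.deriv] using hmin.deriv_eq_zero
  exact (le_rootMultiplicity_iff hp0).1 <|
    (one_lt_rootMultiplicity_iff_isRoot hp0).2 ⟨hr, hcrit⟩

lemma eval_nonneg_of_mul_nonneg (hab : a < b) (hq0 : q ≠ 0)
    (hq : ∀ w ∈ Icc a b, 0 ≤ q.eval w) (hqp : ∀ w ∈ Icc a b, 0 ≤ (q * p).eval w) :
    ∀ w ∈ Icc a b, 0 ≤ p.eval w := by
  have hdense : Dense {w | q.IsRoot w}ᶜ :=
    (finite_setOfPred_isRoot hq0).countable.dense_compl ℝ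
  have hsub : Ioo a b ∩ {w | q.IsRoot w}ᶜ ⊆ {w | 0 ≤ p.eval w} := fun w ⟨hw, hqw⟩ =>
    nonneg_of_mul_nonneg_right (by simpa using hqp w (Ioo_subset_Icc_self hw))
      ((hq w (Ioo_subset_Icc_self hw)).lt_of_ne' hqw)
  rw [← closure_Ioo hab.ne]
  exact closure_minimal (hdense.open_subset_closure_inter isOpen_Ioo) isClosed_closure
    |>.trans (closure_minimal hsub (isClosed_le continuous_const p.continuous))

lemma exists_lukacsRep_factor_of_isRoot (hab : a < b) (hp : ∀ w ∈ Icc a b, 0 ≤ p.eval w)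
    {r : ℝ} (hr : p.IsRoot r) :
    ∃ f q : ℝ[X], p = f * q ∧ 0 < f.natDegree ∧ LukacsRep a b f.natDegree f := by
  obtain ⟨q, hq⟩ := dvd_iff_isRoot.2 hr
  rcases le_or_gt r a with hra | har
  · refine ⟨X - C r, q, hq, by simp, ?_⟩
    rw [natDegree_X_sub_C]
    exact lukacsRep_one_of_degree_le_one hab (degree_X_sub_C_le r) (by simpa using hra)
      (by simpa using hra.trans hab.le)
  rcases le_or_gt b r with hbr | hrb
  · have hdeg : (C r - X).natDegree = 1 := by compute_degree!
    refine ⟨C r - X, -q, by rw [hq]; ring, by rw [hdeg]; norm_num, ?_⟩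
    rw [hdeg]
    exact lukacsRep_one_of_degree_le_one hab (degree_C_sub_X_le r)
      (by simpa using hab.le.trans hbr) (by simpa using hbr)
  obtain ⟨q, rfl⟩ := X_sub_C_sq_dvd_of_eventually_nonneg hr
    (Filter.eventually_of_mem (Icc_mem_nhds har hrb) hp)
  have hsq : (X - C r) ^ 2 = X ^ 2 + C (-(2 * r)) * X + C (r ^ 2) := by
    simp only [map_neg, map_mul, map_pow, map_ofNat]
    ring
  have hdeg : (X ^ 2 + C (-(2 * r)) * X + C (r ^ 2)).natDegree = 2 := by compute_degree!
  refine ⟨_, q, by rw [hsq], by rw [hdeg]; norm_num, ?_⟩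
  rw [hdeg]
  exact lukacsRep_two_of_discrim_nonpos hab (le_of_eq (by rw [discrim]; ring))

lemma exists_lukacsRep_factor_of_aeval_eq_zero (hab : a < b) {z : ℂ} (hz : aeval z p = 0)
    (him : z.im ≠ 0) :
    ∃ f q : ℝ[X], p = f * q ∧ 0 < f.natDegree ∧ LukacsRep a b f.natDegree f := by
  obtain ⟨q, hq⟩ := p.quadratic_dvd_of_aeval_eq_zero_im_ne_zero hz him
  have hquad : X ^ 2 - C (2 * z.re) * X + C (‖z‖ ^ 2) =
      X ^ 2 + C (-(2 * z.re)) * X + C (‖z‖ ^ 2) := by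
    rw [map_neg]
    ring
  have hdeg : (X ^ 2 + C (-(2 * z.re)) * X + C (‖z‖ ^ 2)).natDegree = 2 := by compute_degree!
  refine ⟨_, q, by rw [hq, hquad], by rw [hdeg]; norm_num, ?_⟩
  rw [hdeg]
  refine lukacsRep_two_of_discrim_nonpos hab ?_
  rw [discrim, Complex.sq_norm, Complex.normSq_apply]
  nlinarith [sq_nonneg z.im]

lemma exists_lukacsRep_factor (hab : a < b) (hp : ∀ w ∈ Icc a b, 0 ≤ p.eval w)
    (hdeg : 0 < p.natDegree) :
    ∃ f q : ℝ[X], p = f * q ∧ 0 < f.natDegree ∧ LukacsRep a b f.natDegree f := by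
  obtain ⟨z, hz⟩ :=
    IsAlgClosed.exists_aeval_eq_zero ℂ p (natDegree_pos_iff_degree_pos.1 hdeg).ne'
  by_cases him : z.im = 0
  · have hreal : algebraMap ℝ ℂ z.re = z := Complex.ext (by simp) (by simp [him])
    rw [← hreal, aeval_algebraMap_apply_eq_algebraMap_eval,
      map_eq_zero_iff _ (algebraMap ℝ ℂ).injective] at hz
    exact exists_lukacsRep_factor_of_isRoot hab hp hz
  · exact exists_lukacsRep_factor_of_aeval_eq_zero hab hz him

lemma lukacsRep_natDegree_of_nonneg (hab : a < b) (hp : ∀ w ∈ Icc a b, 0 ≤ p.eval w) :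
    LukacsRep a b p.natDegree p := by
  induction hn : p.natDegree using Nat.strong_induction_on generalizing p with
  | _ n ih =>
  rcases Nat.eq_zero_or_pos n with rfl | hpos
  · rw [eq_C_of_natDegree_eq_zero hn] at hp ⊢
    exact lukacsRep_zero_C (by simpa using hp a ⟨le_rfl, hab.le⟩)
  obtain ⟨f, q, rfl, hf, hfrep⟩ := exists_lukacsRep_factor hab hp (hn ▸ hpos)
  have hf0 : f ≠ 0 := ne_zero_of_natDegree_gt hf
  have hq0 : q ≠ 0 := by
    rintro rfl
    simp at hn
    omega
  have hq := eval_nonneg_of_mul_nonneg hab hf0 (fun w hw => hfrep.eval_nonneg hw) hp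
  rw [natDegree_mul hf0 hq0] at hn
  subst hn
  exact hfrep.mul (ih _ (by omega) hq rfl)

end MarkovLukacs

open MarkovLukacs

open Polynomial

theorem markov_lukasz
    (a b : ℝ) (hab : a < b) (m : ℕ) (p : Polynomial ℝ) (hdeg : p.degree ≤ (2 * m : ℕ)) :
    (∀ w ∈ Set.Icc a b, 0 ≤ p.eval w) ↔
    ∃ q₁ q₂ : Polynomial ℝ, q₁.degree ≤ (m : ℕ) ∧ q₂.degree < (m : ℕ) ∧
      ∀ w : ℝ, p.eval w = (q₁.eval w) ^ 2 + (w - a) * (b - w) * (q₂.eval w) ^ 2 := by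
  constructor
  · intro hp
    obtain ⟨q₁, q₂, h₁, h₂, rfl⟩ := lukacsRep_two_mul.1 <|
      (lukacsRep_natDegree_of_nonneg hab hp).mono hab (natDegree_le_iff_degree_le.2 hdeg)
    exact ⟨q₁, q₂, h₁, h₂, fun w => by simp⟩
  · rintro ⟨q₁, q₂, h₁, h₂, hpq⟩ w hw
    have hrep : p = q₁ ^ 2 + (X - C a) * (C b - X) * q₂ ^ 2 :=
      Polynomial.funext fun w => by simp [hpq]
    exact (lukacsRep_two_mul.2 ⟨q₁, q₂, h₁, h₂, hrep⟩).eval_nonneg hw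
end

section
/- Let A ∈ ℝ^{n×n} be diagonalizable with real rational eigenvalues λ_r = η_r/ρ, η_r ∈ ℤ, ρ ∈ ℕ, ρ > 0, and spectral decomposition e^{At} = Σ_r φ^r e^{λ_r t}. Fix h ∈ ℝ^n, v ∈ ℝ, x ∈ ℝ^n, and T > 0. Set η̄ := max(0, max_r η_r), W := e^{−T/ρ}. Then the condition hᵀ e^{At} x ≤ v for all t ∈ [0,T] holds if and only if the polynomial P(w) := v w^{η̄} − Σ_r (hᵀ φ^r x) w^{η̄ − η_r} satisfies P(w) ≥ 0 for all w ∈ [W, 1]. -/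
/-!
Substituting `w = e^{-t/ρ}` maps `[0, T]` onto `[e^{-T/ρ}, 1]`, and factoring out
`w^η̄ = e^{-η̄ t/ρ} > 0` gives `P(w) = w^η̄ (v - hᵀ e^{At} x)`, because
`w^{η̄ - η_r} = w^η̄ e^{η_r t/ρ}` once `η_r ≤ η̄`. So the two sign conditions agree pointwise.
-/

open Matrix Set Finset

section

open Real

theorem image_exp_neg_div_Icc {ρ : ℝ} (hρ : 0 < ρ) (T : ℝ) :
    (fun t => exp (-(t / ρ))) '' Icc 0 T = Icc (exp (-(T / ρ))) 1 := by
  have hcomp : (fun t => exp (-(t / ρ))) = exp ∘ Neg.neg ∘ (· * ρ⁻¹) := by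
    ext t; simp [div_eq_mul_inv]
  rw [hcomp, image_comp, image_comp, image_mul_right_Icc' _ _ (inv_pos.2 hρ), image_neg_Icc,
    image_exp_Icc]
  simp [div_eq_mul_inv]

theorem dotProduct_sum_smul_mulVec {ι k m R : Type*} [Fintype k] [Fintype m] [CommSemiring R]
    (s : Finset ι) (c : ι → R) (M : ι → Matrix k m R) (y : k → R) (x : m → R) :
    y ⬝ᵥ ((∑ i ∈ s, c i • M i) *ᵥ x) = ∑ i ∈ s, c i * (y ⬝ᵥ (M i *ᵥ x)) := by
  simp [sum_mulVec, dotProduct_sum, smul_mulVec, dotProduct_smul]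

theorem exp_pow_toNat_sub {u : ℝ} {N : ℕ} {k : ℤ} (hk : k ≤ N) :
    exp (-u) ^ ((N : ℤ) - k).toNat = exp (-(N * u)) * exp (k * u) := by
  have hcast : ((((N : ℤ) - k).toNat : ℕ) : ℝ) = N - k := by
    exact_mod_cast Int.toNat_of_nonneg (sub_nonneg.2 hk)
  rw [← exp_nat_mul, ← exp_add, hcast]
  ring_nf

theorem exp_pow_mul_sub_sum {ι : Type*} (s : Finset ι) (u v : ℝ) (N : ℕ) (k : ι → ℤ)
    (hk : ∀ i ∈ s, k i ≤ N) (c : ι → ℝ) :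
    v * exp (-u) ^ N - ∑ i ∈ s, c i * exp (-u) ^ ((N : ℤ) - k i).toNat
      = exp (-(N * u)) * (v - ∑ i ∈ s, exp (k i * u) * c i) := by
  rw [mul_sub, mul_sum, ← exp_nat_mul, neg_mul_eq_mul_neg]
  congr 1
  · ring
  · refine sum_congr rfl fun i hi => ?_
    rw [← neg_mul_eq_mul_neg, exp_pow_toNat_sub (hk i hi)]
    ring

end

theorem intersample_constraint_iff_polynomial_nonneg_general
    (n : ℕ) (A : Matrix (Fin n) (Fin n) ℝ)
    (φ : Fin n → Matrix (Fin n) (Fin n) ℝ) (η : Fin n → ℤ) (ρ : ℕ) (hρ : 0 < ρ)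
    (hspec : ∀ t : ℝ, NormedSpace.exp (t • A) =
      ∑ r : Fin n, Real.exp (((η r : ℝ) / (ρ : ℝ)) * t) • φ r)
    (h x : Fin n → ℝ) (v T : ℝ) :
    (∀ t ∈ Set.Icc (0 : ℝ) T, h ⬝ᵥ ((NormedSpace.exp (t • A)).mulVec x) ≤ v) ↔
    (∀ w ∈ Set.Icc (Real.exp (-(T / (ρ : ℝ)))) 1,
        0 ≤ v * w ^ (Finset.univ.sup fun r => (η r).toNat)
          - ∑ r : Fin n, (h ⬝ᵥ ((φ r).mulVec x)) *
              w ^ ((((Finset.univ.sup fun r' => (η r').toNat) : ℕ) : ℤ) - η r).toNat) := by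
  set N : ℕ := univ.sup fun r => (η r).toNat
  have hN : ∀ r ∈ Finset.univ, η r ≤ N := fun r hr =>
    (Int.self_le_toNat _).trans (mod_cast le_sup (f := fun r => (η r).toNat) hr)
  rw [← image_exp_neg_div_Icc (Nat.cast_pos.2 hρ) T, Set.forall_mem_image]
  refine forall₂_congr fun t _ => ?_
  rw [hspec, dotProduct_sum_smul_mulVec, exp_pow_mul_sub_sum _ _ _ _ _ hN,
    mul_nonneg_iff_of_pos_left (Real.exp_pos _), sub_nonneg]
  simp_rw [div_mul_eq_mul_div, mul_div_assoc]

theorem intersample_constraint_iff_polynomial_nonneg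
    (n : ℕ) (A : Matrix (Fin n) (Fin n) ℝ)
    (φ : Fin n → Matrix (Fin n) (Fin n) ℝ) (η : Fin n → ℤ) (ρ : ℕ) (hρ : 0 < ρ)
    (hspec : ∀ t : ℝ, NormedSpace.exp (t • A) =
      ∑ r : Fin n, Real.exp (((η r : ℝ) / (ρ : ℝ)) * t) • φ r)
    (h x : Fin n → ℝ) (v T : ℝ) (hT : 0 < T) :
    (∀ t ∈ Set.Icc (0 : ℝ) T, h ⬝ᵥ ((NormedSpace.exp (t • A)).mulVec x) ≤ v) ↔
    (∀ w ∈ Set.Icc (Real.exp (-(T / (ρ : ℝ)))) 1,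
        0 ≤ v * w ^ (Finset.univ.sup fun r => (η r).toNat)
          - ∑ r : Fin n, (h ⬝ᵥ ((φ r).mulVec x)) *
              w ^ ((((Finset.univ.sup fun r' => (η r').toNat) : ℕ) : ℤ) - η r).toNat) :=
  intersample_constraint_iff_polynomial_nonneg_general n A φ η ρ hρ hspec h x v T
end
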